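/- arXiv:2211.00800 — 5 statements merged into one kernel-verified Lean document; each statement's English description precedes it below -/
import Mathlib

section
/- Let G be a group, S ⊆ G a finite subset, and let S^Aut = {φ(s) : φ ∈ Aut(G), s ∈ S}. Suppose there is an Aut-invariant homogeneous quasimorphism f on G and an element g₀ of the subgroup generated by S^Aut with f(g₀) ≠ 0. Then the word norm with respect to S^Aut is unbounded on ⟨S^Aut⟩: for every C ∈ ℕ there exists g ∈ ⟨S^Aut⟩ such that every expression of g as a product of elements of S^Aut has length at least C. -/
/-!
An `Aut`-invariant quasimorphism is bounded on the `Aut`-orbit of a finite set, so along a word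
of length `ℓ` in that orbit it grows at most linearly in `ℓ`. Homogeneity makes `|f (g₀ ^ n)|`
grow linearly in `n` with nonzero slope, so the word length of `g₀ ^ n` must tend to infinity.
-/

section Quasimorphism

variable {G : Type*} [Monoid G] {f : G → ℝ} {D : ℝ}

lemma abs_apply_mul_le (hD : ∀ g h : G, |f g + f h - f (g * h)| ≤ D) (g h : G) :
    |f (g * h)| ≤ |f g| + |f h| + D :=
  calc |f (g * h)| = |(f g + f h) - (f g + f h - f (g * h))| := by ring_nf
    _ ≤ |f g + f h| + |f g + f h - f (g * h)| := abs_sub _ _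
    _ ≤ |f g| + |f h| + D := add_le_add (abs_add_le _ _) (hD g h)

lemma abs_apply_list_prod_le (hD : ∀ g h : G, |f g + f h - f (g * h)| ≤ D) (h1 : f 1 = 0)
    {M : ℝ} (L : List G) (hM : ∀ t ∈ L, |f t| ≤ M) :
    |f L.prod| ≤ L.length * (M + D) := by
  induction L with
  | nil => simp [h1]
  | cons a L ih =>
    have hL := ih fun t ht => hM t (List.mem_cons_of_mem a ht)
    have ha := hM a List.mem_cons_self
    rw [List.prod_cons, List.length_cons, Nat.cast_succ]
    linarith [abs_apply_mul_le hD a L.prod]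

end Quasimorphism

lemma abs_apply_le_sum_of_mem_autOrbit {G : Type*} [Group G] {f : G → ℝ}
    (hinv : ∀ (φ : G ≃* G) (g : G), f (φ g) = f g) (S : Finset G) {t : G}
    (ht : ∃ (φ : G ≃* G) (s : G), s ∈ (S : Set G) ∧ t = φ s) :
    |f t| ≤ ∑ s ∈ S, |f s| := by
  obtain ⟨φ, s, hs, rfl⟩ := ht
  rw [hinv]
  exact Finset.single_le_sum (fun s _ => abs_nonneg (f s)) hs

/-- if a group admits an `Aut`-invariant homogeneous quasimorphism that is
nonzero somewhere on the subgroup generated by the `Aut`-closure of a finite set `S`,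
then the word norm with respect to that `Aut`-closure is unbounded on this subgroup. -/
theorem aut_invariant_word_norm_unbounded
    {G : Type*} [Group G] (S : Finset G)
    (SAut : Set G) (hSAut : SAut = {t : G | ∃ (φ : G ≃* G) (s : G), s ∈ (S : Set G) ∧ t = φ s})
    (f : G → ℝ)
    (hqm : ∃ D : ℝ, ∀ g h : G, |f g + f h - f (g * h)| ≤ D)
    (hhom : ∀ (g : G) (n : ℤ), f (g ^ n) = n * f g)
    (hinv : ∀ (φ : G ≃* G) (g : G), f (φ g) = f g)
    (g₀ : G) (hg₀ : g₀ ∈ Subgroup.closure SAut) (hf : f g₀ ≠ 0) :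
    ∀ C : ℕ, ∃ g ∈ Subgroup.closure SAut,
      ∀ L : List G, (∀ t ∈ L, t ∈ SAut) → L.prod = g → C ≤ L.length := by
  intro C
  obtain ⟨D, hD⟩ := hqm
  set K := ∑ s ∈ S, |f s| + D
  have hK : 0 ≤ K := add_nonneg (Finset.sum_nonneg fun s _ => abs_nonneg (f s))
    ((abs_nonneg _).trans (hD 1 1))
  have hword (L : List G) (hL : ∀ t ∈ L, t ∈ SAut) : |f L.prod| ≤ L.length * K :=
    abs_apply_list_prod_le hD (by simpa using hhom 1 0) L fun t ht =>
      abs_apply_le_sum_of_mem_autOrbit hinv S (by simpa [hSAut] using hL t ht)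
  have hpos : 0 < |f g₀| := abs_pos.mpr hf
  obtain ⟨n, hn⟩ := exists_nat_gt (C * K / |f g₀|)
  refine ⟨g₀ ^ n, pow_mem hg₀ n, fun L hL hprod => ?_⟩
  have hpow : |f (g₀ ^ n)| = n * |f g₀| := by
    rw [← zpow_natCast, hhom, abs_mul, Int.cast_natCast, Nat.abs_cast]
  have hlen : n * |f g₀| ≤ L.length * K := by rw [← hpow, ← hprod]; exact hword L hL
  rw [div_lt_iff₀ hpos] at hn
  by_contra! hC
  have : (L.length : ℝ) * K ≤ C * K := mul_le_mul_of_nonneg_right (by exact_mod_cast hC.le) hK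
  linarith
end

section
/- Let G be a group, f : G → ℝ an Aut-invariant homogeneous quasimorphism with defect at most D, and g ∈ G. If for some n ≥ 1 the power gⁿ can be written as a product of k autocommutators of G, then n·|f(g)| ≤ 2·D·k. (In particular, |f(g)| ≤ 2·D·acl(g) and, after stabilizing, |f(g)| ≤ 2·D·sacl(g).) -/
/-- if `f` is an `Aut`-invariant homogeneous quasimorphism with defect at
most `D` and `gⁿ` (with `n ≥ 1`) is a product of `k` autocommutators, then
`n·|f(g)| ≤ 2·D·k`. -/
theorem aut_invariant_qm_vs_autocommutator_length
    {G : Type*} [Group G] (f : G → ℝ) (D : ℝ)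
    (hdef : ∀ g h : G, |f g + f h - f (g * h)| ≤ D)
    (hhom : ∀ (g : G) (n : ℤ), f (g ^ n) = n * f g)
    (hinv : ∀ (φ : G ≃* G) (g : G), f (φ g) = f g)
    (g : G) (n : ℕ) (hn : 1 ≤ n) (L : List G)
    (hL : ∀ t ∈ L, ∃ (φ : G ≃* G) (h : G), t = φ h * h⁻¹)
    (hprod : L.prod = g ^ n) :
    (n : ℝ) * |f g| ≤ 2 * D * L.length := by
  have hf1 : f (1 : G) = 0 := by
    have := hhom 1 0
    simpa using this
  have hDpos : 0 ≤ D := by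
    have := hdef 1 1
    simp [hf1] at this
    linarith [abs_nonneg (f (1 : G))]
  -- each autocommutator has |f t| ≤ D
  have hterm : ∀ t ∈ L, |f t| ≤ D := by
    intro t ht
    obtain ⟨φ, h, rfl⟩ := hL t ht
    have h1 := hdef (φ h) h⁻¹
    have h2 : f (φ h) = f h := hinv φ h
    have h3 : f (h⁻¹ : G) = -f h := by
      have := hhom h (-1)
      simpa using this
    rw [h2, h3] at h1
    have h4 : f h + -f h - f (φ h * h⁻¹) = -(f (φ h * h⁻¹)) := by ring
    rw [h4, abs_neg] at h1
    exact h1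
  -- general product estimate
  have key : ∀ M : List G, (∀ t ∈ M, |f t| ≤ D) → |f M.prod| ≤ 2 * D * M.length := by
    intro M
    induction M with
    | nil => intro _; simp [hf1]
    | cons a M ih =>
      intro hM
      have ha : |f a| ≤ D := hM a (by simp)
      have hrest : |f M.prod| ≤ 2 * D * M.length := ih (fun t ht => hM t (by simp [ht]))
      have hd := hdef a M.prod
      have : |f (a * M.prod)| ≤ |f a| + |f M.prod| + D := by
        have := abs_sub_abs_le_abs_sub (f (a * M.prod)) (f a + f M.prod)
        have habs : |f (a * M.prod) - (f a + f M.prod)| ≤ D := by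
          rw [abs_sub_comm]; simpa using hd
        calc |f (a * M.prod)| ≤ |f a + f M.prod| + D := by linarith
          _ ≤ |f a| + |f M.prod| + D := by linarith [abs_add_le (f a) (f M.prod)]
      simp only [List.prod_cons, List.length_cons]
      push_cast
      calc |f (a * M.prod)| ≤ |f a| + |f M.prod| + D := this
        _ ≤ D + 2 * D * M.length + D := by linarith
        _ = 2 * D * (M.length + 1) := by ring
  have hfn : f (g ^ n) = n * f g := by
    have := hhom g n
    simpa using this
  have : |f L.prod| ≤ 2 * D * L.length := key L hterm
  rw [hprod, hfn] at this
  calc (n : ℝ) * |f g| = |(n : ℝ) * f g| := by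
        rw [abs_mul, abs_of_nonneg (by positivity : (0:ℝ) ≤ (n:ℝ))]
    _ ≤ 2 * D * L.length := this
end

section
/- Let G be a finitely generated group, and suppose that the real vector space of Aut-invariant homogeneous quasimorphisms on G (a linear subspace of the space of all functions G → ℝ) is infinite-dimensional. Then the stable autocommutator length is unbounded on the commutator subgroup: for every C > 0 there exists g ∈ [G, G] such that for all n ≥ 1, whenever gⁿ is a product of k autocommutators, one has k ≥ C·n. -/
/-!
An `Aut`-invariant homogeneous quasimorphism `f` of defect `D` is bounded by `D` on
autocommutators, so `n * |f g| = |f (g ^ n)| ≤ 2 * D * acl (g ^ n)`. If stable autocommutator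
length were bounded on `[G, G]`, every such `f` would therefore be bounded on `[G, G]`, hence
vanish there by homogeneity; a homogeneous quasimorphism vanishing on `[G, G]` is a homomorphism,
since `(g * h) ^ n` and `g ^ n * h ^ n` differ by a commutator. The homomorphisms `G → ℝ` of a
finitely generated group form a finite-dimensional space, as they are determined by their values
on a finite generating set.
-/

theorem eq_zero_of_forall_nat_mul_abs_le {x K : ℝ} (h : ∀ n : ℕ, n * |x| ≤ K) : x = 0 := by
  by_contra hx
  obtain ⟨n, hn⟩ := exists_nat_gt (K / |x|)
  rw [div_lt_iff₀ (abs_pos.mpr hx)] at hn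
  linarith [h n]

theorem mul_pow_mul_inv_mem_commutator {G : Type*} [Group G] (g h : G) (n : ℕ) :
    (g * h) ^ n * (g ^ n * h ^ n)⁻¹ ∈ commutator G := by
  rw [← Abelianization.ker_of, MonoidHom.mem_ker]
  simp [mul_pow]

section Quasimorphism

variable {G : Type*} {f : G → ℝ}

theorem abs_list_prod_le [Monoid G] {D E : ℝ} (hD : ∀ g h : G, |f g + f h - f (g * h)| ≤ D)
    (h1 : f 1 = 0) (L : List G) (hL : ∀ t ∈ L, |f t| ≤ E) :
    |f L.prod| ≤ (E + D) * L.length := by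
  induction L with
  | nil => simp [h1]
  | cons t L ih =>
    have ht := hL t List.mem_cons_self
    have hrest := ih fun s hs => hL s (List.mem_cons_of_mem t hs)
    have hdefect := hD t L.prod
    rw [List.prod_cons, List.length_cons, Nat.cast_succ]
    rw [abs_le] at *
    constructor <;> linarith

variable [Group G] (hhom : ∀ (g : G) (n : ℤ), f (g ^ n) = n * f g)
include hhom

theorem apply_one_of_homogeneous : f 1 = 0 := by
  simpa using hhom 1 0

theorem apply_inv_of_homogeneous (g : G) : f g⁻¹ = -f g := by
  simpa using hhom g (-1)

theorem apply_pow_of_homogeneous (g : G) (n : ℕ) : f (g ^ n) = n * f g := by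
  simpa using hhom g n

theorem abs_apply_autocommutator_le {D : ℝ} (hD : ∀ g h : G, |f g + f h - f (g * h)| ≤ D)
    (hinv : ∀ (φ : G ≃* G) (g : G), f (φ g) = f g) (φ : G ≃* G) (h : G) :
    |f (φ h * h⁻¹)| ≤ D := by
  simpa [hinv, apply_inv_of_homogeneous hhom] using hD (φ h) h⁻¹

/-- The easy half of Bavard duality for autocommutator length. -/
theorem nat_mul_abs_le_of_autocommutator_list {D : ℝ}
    (hD : ∀ g h : G, |f g + f h - f (g * h)| ≤ D) (hinv : ∀ (φ : G ≃* G) (g : G), f (φ g) = f g)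
    {L : List G} (hL : ∀ t ∈ L, ∃ (φ : G ≃* G) (h : G), t = φ h * h⁻¹) {g : G} {n : ℕ}
    (hprod : L.prod = g ^ n) : n * |f g| ≤ 2 * D * L.length := by
  have hbound := abs_list_prod_le hD (apply_one_of_homogeneous hhom) L fun t ht => by
    obtain ⟨φ, h, rfl⟩ := hL t ht
    exact abs_apply_autocommutator_le hhom hD hinv φ h
  rwa [hprod, apply_pow_of_homogeneous hhom, abs_mul, Nat.abs_cast, ← two_mul] at hbound

theorem apply_eq_zero_of_bounded_on_subgroup {H : Subgroup G} {B : ℝ} (hB : ∀ c ∈ H, |f c| ≤ B)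
    {c : G} (hc : c ∈ H) : f c = 0 := by
  refine eq_zero_of_forall_nat_mul_abs_le (K := B) fun n => ?_
  simpa [apply_pow_of_homogeneous hhom, abs_mul] using hB (c ^ n) (pow_mem hc n)

theorem abs_apply_le_of_autocommutator_list {D : ℝ}
    (hD : ∀ g h : G, |f g + f h - f (g * h)| ≤ D) (hinv : ∀ (φ : G ≃* G) (g : G), f (φ g) = f g)
    {L : List G} (hL : ∀ t ∈ L, ∃ (φ : G ≃* G) (h : G), t = φ h * h⁻¹) {g : G} {n : ℕ}
    (hprod : L.prod = g ^ n) (hn : 1 ≤ n) {C : ℝ} (hlen : L.length ≤ C * n) :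
    |f g| ≤ 2 * D * C := by
  have hD0 : 0 ≤ D := (abs_nonneg _).trans (by simpa using hD 1 1)
  have hn0 : (0 : ℝ) < n := by exact_mod_cast hn
  refine le_of_mul_le_mul_left ?_ hn0
  calc n * |f g| ≤ 2 * D * L.length := nat_mul_abs_le_of_autocommutator_list hhom hD hinv hL hprod
    _ ≤ 2 * D * (C * n) := by gcongr
    _ = n * (2 * D * C) := by ring

theorem apply_mul_of_eq_zero_on_commutator {D : ℝ} (hD : ∀ g h : G, |f g + f h - f (g * h)| ≤ D)
    (hcomm : ∀ c ∈ commutator G, f c = 0) (g h : G) : f (g * h) = f g + f h := by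
  suffices f (g * h) - f g - f h = 0 by linarith
  refine eq_zero_of_forall_nat_mul_abs_le (K := 2 * D) fun n => ?_
  have hsplit := hD ((g * h) ^ n * (g ^ n * h ^ n)⁻¹) (g ^ n * h ^ n)
  rw [hcomm _ (mul_pow_mul_inv_mem_commutator g h n), inv_mul_cancel_right] at hsplit
  have hpow := hD (g ^ n) (h ^ n)
  simp only [apply_pow_of_homogeneous hhom] at hsplit hpow
  rw [← Nat.abs_cast n, ← abs_mul]
  rw [abs_le] at *
  constructor <;> nlinarith

end Quasimorphism

section HomSubmodule

variable (G : Type*) [Group G]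

def homSubmodule : Submodule ℝ (G → ℝ) where
  carrier := {f | ∀ g h, f (g * h) = f g + f h}
  add_mem' hf hf' g h := by simp only [Pi.add_apply, hf g h, hf' g h]; ring
  zero_mem' _ _ := by simp
  smul_mem' c f hf g h := by simp [hf g h, mul_add]

variable {G}

theorem eq_zero_of_mem_homSubmodule_of_eqOn_generators {f : G → ℝ} (hf : f ∈ homSubmodule G)
    {T : Set G} (hT : Subgroup.closure T = ⊤) (hfT : ∀ t ∈ T, f t = 0) : f = 0 := by
  let χ : G →* Multiplicative ℝ := MonoidHom.mk' (fun g => .ofAdd (f g)) hf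
  have hχ : χ = 1 :=
    MonoidHom.eq_of_eqOn_dense hT fun t ht => congrArg Multiplicative.ofAdd (hfT t ht)
  exact funext fun g => congrArg Multiplicative.toAdd (DFunLike.congr_fun hχ g)

instance [Group.FG G] : FiniteDimensional ℝ (homSubmodule G) := by
  obtain ⟨T, hT, hTfin⟩ := Group.fg_iff.mp ‹_›
  have := hTfin.to_subtype
  refine FiniteDimensional.of_injective ((LinearMap.funLeft ℝ ℝ ((↑) : T → G)).domRestrict _) ?_
  refine (injective_iff_map_eq_zero _).mpr fun f hf => Subtype.ext ?_
  exact eq_zero_of_mem_homSubmodule_of_eqOn_generators f.2 hT fun t ht => congrFun hf ⟨t, ht⟩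

end HomSubmodule

/-- if a finitely generated group `G` has an infinite-dimensional space of
`Aut`-invariant homogeneous quasimorphisms, then stable autocommutator length is
unbounded on the commutator subgroup. -/
theorem sacl_unbounded_of_infinite_dim_aut_invariant_qms
    {G : Type*} [Group G] (hfg : Group.FG G)
    (hdim : ¬ FiniteDimensional ℝ
      (Submodule.span ℝ {f : G → ℝ |
        (∃ D : ℝ, ∀ g h : G, |f g + f h - f (g * h)| ≤ D) ∧
        (∀ (g : G) (n : ℤ), f (g ^ n) = n * f g) ∧
        (∀ (φ : G ≃* G) (g : G), f (φ g) = f g)})) :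
    ∀ C : ℝ, 0 < C → ∃ g ∈ commutator G,
      ∀ n : ℕ, 1 ≤ n → ∀ L : List G,
        (∀ t ∈ L, ∃ (φ : G ≃* G) (h : G), t = φ h * h⁻¹) →
        L.prod = g ^ n → C * n ≤ L.length := by
  by_contra! hbounded
  obtain ⟨C, -, hshort⟩ := hbounded
  refine hdim (Submodule.finiteDimensional_of_le (S₂ := homSubmodule G) (Submodule.span_le.mpr ?_))
  rintro f ⟨⟨D, hD⟩, hhom, hinv⟩
  refine apply_mul_of_eq_zero_on_commutator hhom hD fun c hc => ?_
  refine apply_eq_zero_of_bounded_on_subgroup hhom (B := 2 * D * C) (fun c hc => ?_) hc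
  obtain ⟨n, hn, L, hL, hprod, hlen⟩ := hshort c hc
  exact abs_apply_le_of_autocommutator_list hhom hD hinv hL hprod hn hlen.le
end

section
/- Let F be the free group on a type α, let x ∈ α, and let g ∈ F lie in the subgroup generated by the basis elements indexed by α ∖ {x}. Then for every n ≥ 0 the element gⁿ is an autocommutator of F: there exists an automorphism φ of F with gⁿ = φ(of x)·(of x)⁻¹, where φ sends the generator of x to gⁿ·(of x) and fixes all other generators. Consequently sacl(g) = 0. -/
open Filter

/-- The set of autocommutators of a group. -/
def IsAutocommutator {G : Type*} [Group G] (x : G) : Prop :=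
  ∃ (φ : G ≃* G) (h : G), x = φ h * h⁻¹

/-- Autocommutator length, valued in `ℕ∞` (`⊤` if `x` is not a product of
autocommutators). -/
noncomputable def acl {G : Type*} [Group G] (x : G) : ℕ∞ :=
  sInf {k : ℕ∞ | ∃ L : List G, (L.length : ℕ∞) = k ∧
    (∀ t ∈ L, IsAutocommutator t) ∧ L.prod = x}

section Aux
open FreeGroup

private lemma fix_closure {α : Type*} (x : α) (f : FreeGroup α →* FreeGroup α)
    (hf : ∀ a : α, a ≠ x → f (of a) = of a) :
    ∀ h ∈ Subgroup.closure (of '' {a : α | a ≠ x}), f h = h := by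
  intro h hh
  induction hh using Subgroup.closure_induction with
  | mem y hy =>
      obtain ⟨a, ha, rfl⟩ := hy
      exact hf a ha
  | one => simp
  | mul a b _ _ ha hb => simp [ha, hb]
  | inv a _ ha => simp [ha]

private lemma exists_aut {α : Type*} (x : α) (h : FreeGroup α)
    (hh : h ∈ Subgroup.closure (FreeGroup.of '' {a : α | a ≠ x})) :
    ∃ φ : FreeGroup α ≃* FreeGroup α,
      φ (FreeGroup.of x) = h * FreeGroup.of x ∧
      ∀ a : α, a ≠ x → φ (FreeGroup.of a) = FreeGroup.of a := by
  classical
  set f : FreeGroup α →* FreeGroup α :=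
    FreeGroup.lift (fun a => if a = x then h * FreeGroup.of a else FreeGroup.of a) with hf
  set f' : FreeGroup α →* FreeGroup α :=
    FreeGroup.lift (fun a => if a = x then h⁻¹ * FreeGroup.of a else FreeGroup.of a) with hf'
  have hfa : ∀ a : α, a ≠ x → f (FreeGroup.of a) = FreeGroup.of a := by
    intro a ha; simp [hf, ha]
  have hf'a : ∀ a : α, a ≠ x → f' (FreeGroup.of a) = FreeGroup.of a := by
    intro a ha; simp [hf', ha]
  have hfx : f (FreeGroup.of x) = h * FreeGroup.of x := by simp [hf]
  have hf'x : f' (FreeGroup.of x) = h⁻¹ * FreeGroup.of x := by simp [hf']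
  have h1 : f'.comp f = MonoidHom.id _ := by
    apply FreeGroup.ext_hom
    intro a
    by_cases ha : a = x
    · rw [MonoidHom.comp_apply, MonoidHom.id_apply, ha, hfx, _root_.map_mul, hf'x,
        fix_closure x f' hf'a h hh]
      group
    · simp [hfa a ha, hf'a a ha]
  have h2 : f.comp f' = MonoidHom.id _ := by
    apply FreeGroup.ext_hom
    intro a
    by_cases ha : a = x
    · rw [MonoidHom.comp_apply, MonoidHom.id_apply, ha, hf'x, _root_.map_mul, hfx,
        _root_.map_inv, fix_closure x f hfa h hh]
      group
    · simp [hfa a ha, hf'a a ha]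
  have hli : Function.LeftInverse f' f := fun y => by
    simpa using DFunLike.congr_fun h1 y
  have hri : Function.RightInverse f' f := fun y => by
    simpa using DFunLike.congr_fun h2 y
  exact ⟨MulEquiv.mk ⟨f, f', hli, hri⟩ f.map_mul, hfx, hfa⟩

end Aux

/-- if `g` lies in the subgroup of the free group generated by the basis
elements other than `of x`, then every power `gⁿ` is an autocommutator, via the
automorphism sending `of x ↦ gⁿ · of x` and fixing the other generators; consequently
`sacl(g) = 0`. -/
theorem powers_autocommutators_of_proper_free_factor
    {α : Type*} (x : α) (g : FreeGroup α)
    (hg : g ∈ Subgroup.closure (FreeGroup.of '' {a : α | a ≠ x})) :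
    (∀ n : ℕ, ∃ φ : FreeGroup α ≃* FreeGroup α,
      g ^ n = φ (FreeGroup.of x) * (FreeGroup.of x)⁻¹ ∧
      φ (FreeGroup.of x) = g ^ n * FreeGroup.of x ∧
      ∀ a : α, a ≠ x → φ (FreeGroup.of a) = FreeGroup.of a) ∧
    Tendsto (fun n : ℕ => ((acl (g ^ n)).toNat : ℝ) / n) atTop (nhds 0) := by
  have main : ∀ n : ℕ, ∃ φ : FreeGroup α ≃* FreeGroup α,
      g ^ n = φ (FreeGroup.of x) * (FreeGroup.of x)⁻¹ ∧
      φ (FreeGroup.of x) = g ^ n * FreeGroup.of x ∧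
      ∀ a : α, a ≠ x → φ (FreeGroup.of a) = FreeGroup.of a := by
    intro n
    obtain ⟨φ, hφx, hφa⟩ := exists_aut x (g ^ n) (pow_mem hg n)
    exact ⟨φ, by rw [hφx]; group, hφx, hφa⟩
  refine ⟨main, ?_⟩
  have hacl : ∀ n : ℕ, ((acl (g ^ n)).toNat : ℝ) ≤ 1 := by
    intro n
    obtain ⟨φ, h1, -, -⟩ := main n
    have hle : acl (g ^ n) ≤ 1 := by
      apply sInf_le
      exact ⟨[g ^ n], by simp, by
        intro t ht; simp only [List.mem_singleton] at ht; subst ht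
        exact ⟨φ, FreeGroup.of x, h1⟩, by simp⟩
    have : (acl (g ^ n)).toNat ≤ (1 : ℕ∞).toNat :=
      ENat.toNat_le_toNat hle (by simp)
    simp only [ENat.toNat_one] at this
    exact_mod_cast this
  have h0 : ∀ n : ℕ, 0 ≤ ((acl (g ^ n)).toNat : ℝ) / n := by
    intro n
    apply div_nonneg <;> positivity
  have hle : ∀ n : ℕ, ((acl (g ^ n)).toNat : ℝ) / n ≤ 1 / n := by
    intro n
    gcongr
    exact hacl n
  exact squeeze_zero h0 hle tendsto_one_div_atTop_nhds_zero_nat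
end

section
/- Let α be an infinite type and let F be the free group on α. Then every Aut-invariant homogeneous quasimorphism f : F → ℝ is identically zero. (Indeed, every element of F lies in the subgroup generated by a cofinite set of basis elements, hence all its powers are autocommutators, so f is bounded on cyclic subgroups and therefore vanishes.) -/
/-! If `g` lies in the subgroup generated by the basis elements other than `a`, then the
transvection `a ↦ gⁿ * a` (fixing the other basis elements) is an automorphism, so every power
`gⁿ = φ a * a⁻¹` is an autocommutator. An `Aut`-invariant quasimorphism is bounded by its defect
on autocommutators, and a homogeneous function bounded on a cyclic subgroup vanishes on its
generator. In infinite rank every `g` is a word in finitely many letters, so such an `a` exists. -/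

section Quasimorphism

variable {G : Type*} [Group G] {f : G → ℝ}

theorem abs_apply_mul_inv_le_of_mulEquiv_invariant {D : ℝ}
    (hqm : ∀ g h : G, |f g + f h - f (g * h)| ≤ D)
    (hinv : ∀ (φ : G ≃* G) (g : G), f (φ g) = f g) (φ : G ≃* G) (x : G) :
    |f (φ x * x⁻¹)| ≤ D := by
  simpa [hinv] using hqm (φ x * x⁻¹) x

theorem eq_zero_of_forall_abs_zpow_le {g : G} {C : ℝ}
    (hhom : ∀ n : ℤ, f (g ^ n) = n * f g) (hbdd : ∀ n : ℤ, |f (g ^ n)| ≤ C) : f g = 0 := by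
  by_contra hne
  obtain ⟨n, hn⟩ := exists_nat_gt (C / |f g|)
  have hbdd_n := hbdd n
  rw [hhom, abs_mul, Int.cast_natCast, Nat.abs_cast] at hbdd_n
  rw [div_lt_iff₀ (abs_pos.mpr hne)] at hn
  linarith

end Quasimorphism

namespace FreeGroup

variable {α : Type*}

theorem exists_finset_mem_closure (g : FreeGroup α) :
    ∃ s : Finset α, g ∈ Subgroup.closure (of '' s) := by
  classical
  induction g using FreeGroup.induction_on with
  | C1 => exact ⟨∅, one_mem _⟩
  | of x => exact ⟨{x}, Subgroup.subset_closure ⟨x, by simp, rfl⟩⟩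
  | inv_of x hx =>
    obtain ⟨s, hs⟩ := hx
    exact ⟨s, inv_mem hs⟩
  | mul x y hx hy =>
    obtain ⟨s, hs⟩ := hx
    obtain ⟨t, ht⟩ := hy
    refine ⟨s ∪ t, mul_mem ?_ ?_⟩
    · exact Subgroup.closure_mono (by gcongr; simp) hs
    · exact Subgroup.closure_mono (by gcongr; simp) ht

theorem exists_mem_closure_image_compl_singleton [Infinite α] (g : FreeGroup α) :
    ∃ a, g ∈ Subgroup.closure (of '' {a}ᶜ) := by
  obtain ⟨s, hs⟩ := exists_finset_mem_closure g
  obtain ⟨a, ha⟩ := Infinite.exists_notMem_finset s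
  exact ⟨a, Subgroup.closure_mono (by gcongr; simpa using ha) hs⟩

section Transvection

variable [DecidableEq α] (a : α) (u : FreeGroup α)

def transvection : FreeGroup α →* FreeGroup α :=
  lift (Function.update of a (u * of a))

@[simp]
theorem transvection_of_self : transvection a u (of a) = u * of a := by
  simp [transvection]

theorem transvection_of_of_ne {b : α} (hb : b ≠ a) : transvection a u (of b) = of b := by
  simp [transvection, hb]

theorem transvection_eq_self_of_mem_closure {g : FreeGroup α}
    (hg : g ∈ Subgroup.closure (of '' {a}ᶜ)) : transvection a u g = g := by
  refine MonoidHom.eqOn_closure (g := MonoidHom.id _) ?_ hg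
  rintro _ ⟨b, hb, rfl⟩
  exact transvection_of_of_ne a u hb

variable {a u}

theorem transvection_comp_transvection_inv (hu : u ∈ Subgroup.closure (of '' {a}ᶜ)) :
    (transvection a u).comp (transvection a u⁻¹) = MonoidHom.id _ := by
  refine ext_hom _ _ fun b => ?_
  rcases eq_or_ne b a with rfl | hb
  · simp [transvection_eq_self_of_mem_closure b u hu]
  · simp [transvection_of_of_ne _ _ hb]

def transvectionEquiv (hu : u ∈ Subgroup.closure (of '' {a}ᶜ)) : FreeGroup α ≃* FreeGroup α :=
  (transvection a u).toMulEquiv (transvection a u⁻¹)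
    (by simpa using transvection_comp_transvection_inv (inv_mem hu))
    (transvection_comp_transvection_inv hu)

theorem transvectionEquiv_of_mul_inv (hu : u ∈ Subgroup.closure (of '' {a}ᶜ)) :
    transvectionEquiv hu (of a) * (of a)⁻¹ = u := by
  simp [transvectionEquiv]

end Transvection

end FreeGroup

/-- on a free group of infinite rank, every `Aut`-invariant homogeneous
quasimorphism vanishes identically. -/
theorem aut_invariant_qm_trivial_on_infinite_rank_free_group
    {α : Type*} [Infinite α] (f : FreeGroup α → ℝ)
    (hqm : ∃ D : ℝ, ∀ g h : FreeGroup α, |f g + f h - f (g * h)| ≤ D)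
    (hhom : ∀ (g : FreeGroup α) (n : ℤ), f (g ^ n) = n * f g)
    (hinv : ∀ (φ : FreeGroup α ≃* FreeGroup α) (g : FreeGroup α), f (φ g) = f g) :
    ∀ g : FreeGroup α, f g = 0 := by
  classical
  obtain ⟨D, hD⟩ := hqm
  intro g
  obtain ⟨a, ha⟩ := FreeGroup.exists_mem_closure_image_compl_singleton g
  refine eq_zero_of_forall_abs_zpow_le (hhom g) (C := D) fun n => ?_
  have hgn := zpow_mem ha n
  rw [← FreeGroup.transvectionEquiv_of_mul_inv hgn]
  exact abs_apply_mul_inv_le_of_mulEquiv_invariant hD hinv _ _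
end
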